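/- arXiv:2304.12654 — 3 statements merged into one kernel-verified Lean document; each statement's English description precedes it below -/
import Mathlib

section
/- Let T be a positive integer and let β_1,…,β_T ∈ (0,1); set α_t := 1−β_t and ᾱ_t := ∏_{i=1}^t α_i. Fix x_0 ∈ ℝ and let ε_1,…,ε_T be independent random variables, each with law gaussianReal 0 1. Define recursively x_t := √α_t · x_{t−1} + √β_t · ε_t for t = 1,…,T. Then for every t ∈ {1,…,T} the law of x_t is gaussianReal (√ᾱ_t · x_0) (1−ᾱ_t). (One-dimensional form of the forward-marginal claim of Proposition 3.1 for the continuous diffusion model.) -/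
/-!
Induction on `t`. By the recursion, `x_t` is measurable with respect to the σ-algebra generated
by `ε_1, …, ε_t`, hence independent of `ε_{t+1}`, so `x_{t+1} = √α_{t+1} x_t + √β_{t+1} ε_{t+1}`
is a linear combination of independent Gaussians and is Gaussian, with mean
`√α_{t+1} √ᾱ_t x_0` and variance `α_{t+1} (1 - ᾱ_t) + β_{t+1} = 1 - ᾱ_{t+1}`.
-/

open MeasureTheory ProbabilityTheory Finset

open scoped NNReal

namespace ProbabilityTheory

variable {Ω : Type*} {mΩ : MeasurableSpace Ω} {P : Measure Ω}

lemma iIndepFun.indepFun_of_measurable_biSup {ι : Type*} {β : ι → Type*}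
    {mβ : ∀ i, MeasurableSpace (β i)} {ε : ∀ i, Ω → β i} (hε : ∀ i, Measurable (ε i))
    (hindep : iIndepFun ε P) {S : Set ι} {j : ι} (hj : j ∉ S) {γ : Type*} [MeasurableSpace γ]
    {X : Ω → γ} (hX : Measurable[⨆ i ∈ S, (mβ i).comap (ε i)] X) :
    IndepFun X (ε j) P := by
  rw [IndepFun_iff_Indep]
  have hS := indep_biSup_compl (fun i => (hε i).comap_le) hindep.iIndep S
  exact indep_of_indep_of_le_left
    (indep_of_indep_of_le_right hS (le_biSup (fun i => (mβ i).comap (ε i)) hj)) hX.comap_le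

lemma measurable_biSup_comap_Iic_of_eq_succ {E S : Type*} {mE : MeasurableSpace E}
    [MeasurableSpace S] {ε : ℕ → Ω → E} {x : ℕ → Ω → S} {F : ℕ → S → E → S}
    (hF : ∀ t, Measurable (Function.uncurry (F t))) {x₀ : S} (hx0 : x 0 = fun _ => x₀)
    (hxrec : ∀ t, x (t + 1) = fun ω => F t (x t ω) (ε (t + 1) ω)) (t : ℕ) :
    Measurable[⨆ i ∈ Set.Iic t, mE.comap (ε i)] (x t) := by
  induction t with
  | zero => rw [hx0]; exact measurable_const
  | succ t ih =>
    set m : ℕ → MeasurableSpace Ω := fun t => ⨆ i ∈ Set.Iic t, mE.comap (ε i)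
    have hmono : m t ≤ m (t + 1) := biSup_mono fun i hi => Set.Iic_subset_Iic.mpr t.le_succ hi
    have hε : Measurable[m (t + 1)] (ε (t + 1)) :=
      (comap_measurable (ε (t + 1))).mono (le_biSup (fun i => mE.comap (ε i)) Set.self_mem_Iic)
        le_rfl
    have hpair : Measurable[m (t + 1)] fun ω => (x t ω, ε (t + 1) ω) :=
      (ih.mono hmono le_rfl).prodMk hε
    rw [hxrec t]
    exact (hF t).comp hpair

lemma IndepFun.hasLaw_const_mul_add_const_mul_gaussianReal {X Y : Ω → ℝ}
    (hXY : IndepFun X Y P) {m₁ m₂ : ℝ} {v₁ v₂ : ℝ≥0} (hX : HasLaw X (gaussianReal m₁ v₁) P)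
    (hY : HasLaw Y (gaussianReal m₂ v₂) P) (a b : ℝ) :
    HasLaw (fun ω => a * X ω + b * Y ω)
      (gaussianReal (a * m₁ + b * m₂) (‖a‖₊ ^ 2 * v₁ + ‖b‖₊ ^ 2 * v₂)) P := by
  have hsq (c : ℝ) : NNReal.mk (c ^ 2) (sq_nonneg c) = ‖c‖₊ ^ 2 := by ext; simp [sq_abs]
  refine ⟨by fun_prop, ?_⟩
  have hsum := gaussianReal_add_gaussianReal_of_indepFun
    (hXY.comp (measurable_const_mul a) (measurable_const_mul b))
    (gaussianReal_const_mul hX a).map_eq (gaussianReal_const_mul hY b).map_eq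
  rwa [hsq, hsq] at hsum

lemma IndepFun.hasLaw_sqrt_one_sub_mul_add_sqrt_mul {X Y : Ω → ℝ} (hXY : IndepFun X Y P)
    {x₀ A b : ℝ} (hA₀ : 0 ≤ A) (hA₁ : A ≤ 1) (hb₀ : 0 ≤ b) (hb₁ : b ≤ 1)
    (hX : HasLaw X (gaussianReal (√A * x₀) (1 - A).toNNReal) P)
    (hY : HasLaw Y (gaussianReal 0 1) P) :
    HasLaw (fun ω => √(1 - b) * X ω + √b * Y ω)
      (gaussianReal (√(A * (1 - b)) * x₀) (1 - A * (1 - b)).toNNReal) P := by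
  have hmean : √(A * (1 - b)) * x₀ = √(1 - b) * (√A * x₀) + √b * 0 := by
    rw [Real.sqrt_mul hA₀]
    ring
  have hvar : (1 - A * (1 - b)).toNNReal
      = ‖√(1 - b)‖₊ ^ 2 * (1 - A).toNNReal + ‖√b‖₊ ^ 2 * 1 := by
    have hAb : A * (1 - b) ≤ 1 := by nlinarith
    refine NNReal.coe_injective ?_
    simp only [NNReal.coe_add, NNReal.coe_mul, NNReal.coe_pow, coe_nnnorm, NNReal.coe_one,
      Real.coe_toNNReal _ (sub_nonneg.mpr hAb), Real.coe_toNNReal _ (sub_nonneg.mpr hA₁),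
      Real.norm_of_nonneg (Real.sqrt_nonneg _), Real.sq_sqrt hb₀, Real.sq_sqrt (sub_nonneg.mpr hb₁)]
    ring
  rw [hmean, hvar]
  exact hXY.hasLaw_const_mul_add_const_mul_gaussianReal hX hY √(1 - b) √b

end ProbabilityTheory

theorem forward_marginal_continuous_general
    {Ω : Type*} [MeasureSpace Ω] (P : Measure Ω) [IsProbabilityMeasure P]
    (T : ℕ) (β : ℕ → ℝ) (hβ : ∀ t, 1 ≤ t → t ≤ T → β t ∈ Set.Ioo (0 : ℝ) 1)
    (x₀ : ℝ) (ε : ℕ → Ω → ℝ) (hεmeas : ∀ t, Measurable (ε t))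
    (hindep : iIndepFun ε P)
    (hεlaw : ∀ t, P.map (ε t) = gaussianReal 0 1)
    (x : ℕ → Ω → ℝ) (hx0 : x 0 = fun _ => x₀)
    (hxrec : ∀ t, x (t + 1) =
      fun ω => Real.sqrt (1 - β (t + 1)) * x t ω + Real.sqrt (β (t + 1)) * ε (t + 1) ω) :
    ∀ t, 1 ≤ t → t ≤ T →
      P.map (x t) =
        gaussianReal (Real.sqrt (∏ i ∈ Finset.Icc 1 t, (1 - β i)) * x₀)
          (Real.toNNReal (1 - ∏ i ∈ Finset.Icc 1 t, (1 - β i))) := by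
  have hx_adapted := measurable_biSup_comap_Iic_of_eq_succ
    (F := fun t y e => √(1 - β (t + 1)) * y + √(β (t + 1)) * e) (by fun_prop) hx0 hxrec
  suffices H : ∀ t ≤ T, HasLaw (x t)
      (gaussianReal (√(∏ i ∈ Icc 1 t, (1 - β i)) * x₀) (1 - ∏ i ∈ Icc 1 t, (1 - β i)).toNNReal) P
    from fun t _ ht => (H t ht).map_eq
  intro t
  induction t with
  | zero =>
    intro _
    simpa [hx0] using hasLaw_dirac_of_ae_eq (P := P) (ae_of_all _ fun _ => rfl)
  | succ t ih =>
    intro ht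
    have hα (i : ℕ) (hi : i ∈ Icc 1 t) : 0 ≤ 1 - β i ∧ 1 - β i ≤ 1 := by
      obtain ⟨hi₁, hit⟩ := mem_Icc.mp hi
      obtain ⟨hβ₀, hβ₁⟩ := hβ i hi₁ (hit.trans t.le_succ |>.trans ht)
      constructor <;> linarith
    obtain ⟨hβ₀, hβ₁⟩ := hβ (t + 1) t.succ_pos ht
    have hxε : IndepFun (x t) (ε (t + 1)) P :=
      hindep.indepFun_of_measurable_biSup hεmeas (by simp) (hx_adapted t)
    rw [prod_Icc_succ_top t.succ_pos, hxrec t]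
    exact hxε.hasLaw_sqrt_one_sub_mul_add_sqrt_mul (prod_nonneg fun i hi => (hα i hi).1)
      (prod_le_one (fun i hi => (hα i hi).1) fun i hi => (hα i hi).2) hβ₀.le hβ₁.le
      (ih (t.le_succ.trans ht)) ⟨(hεmeas _).aemeasurable, hεlaw _⟩

/-- One-dimensional forward-marginal claim of Proposition 3.1 for the continuous diffusion
model: with `x_t = √α_t · x_{t-1} + √β_t · ε_t` and independent standard Gaussian noises,
the law of `x_t` is `gaussianReal (√ᾱ_t · x_0) (1 - ᾱ_t)`. -/
theorem forward_marginal_continuous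
    {Ω : Type*} [MeasureSpace Ω] (P : Measure Ω) [IsProbabilityMeasure P]
    (T : ℕ) (hT : 0 < T) (β : ℕ → ℝ) (hβ : ∀ t, 1 ≤ t → t ≤ T → β t ∈ Set.Ioo (0 : ℝ) 1)
    (x₀ : ℝ) (ε : ℕ → Ω → ℝ) (hεmeas : ∀ t, Measurable (ε t))
    (hindep : iIndepFun ε P)
    (hεlaw : ∀ t, P.map (ε t) = gaussianReal 0 1)
    (x : ℕ → Ω → ℝ) (hx0 : x 0 = fun _ => x₀)
    (hxrec : ∀ t, x (t + 1) =
      fun ω => Real.sqrt (1 - β (t + 1)) * x t ω + Real.sqrt (β (t + 1)) * ε (t + 1) ω) :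
    ∀ t, 1 ≤ t → t ≤ T →
      P.map (x t) =
        gaussianReal (Real.sqrt (∏ i ∈ Finset.Icc 1 t, (1 - β i)) * x₀)
          (Real.toNNReal (1 - ∏ i ∈ Finset.Icc 1 t, (1 - β i))) :=
  forward_marginal_continuous_general P T β hβ x₀ ε hεmeas hindep hεlaw x hx0 hxrec
end

section
/- Let β_1,…,β_T ∈ (0,1), α_t := 1−β_t, ᾱ_t := ∏_{i=1}^t α_i, and fix t with 2 ≤ t ≤ T. Let φ(x; m, v) denote the density of gaussianReal m v at x; define the posterior mean μ̃_t(y, x_0) := (√ᾱ_{t−1}·β_t·x_0 + √α_t·(1−ᾱ_{t−1})·y)/(1−ᾱ_t) and the posterior variance σ_t² := ((1−ᾱ_{t−1})/(1−ᾱ_t))·β_t. Then for all x_0, x′, y ∈ ℝ the Gaussian densities factor as φ(y; √α_t·x′, β_t) · φ(x′; √ᾱ_{t−1}·x_0, 1−ᾱ_{t−1}) = φ(x′; μ̃_t(y, x_0), σ_t²) · φ(y; √ᾱ_t·x_0, 1−ᾱ_t). (This is the Bayes-rule computation showing the forward-process posterior q(x_{t−1}|x_t, x_0) of the continuous diffusion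 model is Gaussian with mean μ̃_t and variance σ_t² as used in the reverse process of Appendix C.) -/
open Finset

/-- The density of the real Gaussian measure `gaussianReal m v` (for `v > 0`) at `x`:
`φ(x; m, v) = (2πv)^{-1/2} · exp(-(x-m)²/(2v))`. -/
noncomputable def gaussDensity (x m v : ℝ) : ℝ :=
  (Real.sqrt (2 * Real.pi * v))⁻¹ * Real.exp (-((x - m) ^ 2) / (2 * v))

/-! The forward step `x_t | x_{t-1} ~ N(√α_t x_{t-1}, β_t)` is a linear-Gaussian observation of
`x_{t-1} ~ N(√ᾱ_{t-1} x₀, 1 - ᾱ_{t-1})`, so the joint density factors, by completing the square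
in `x_{t-1}`, as posterior times marginal. The marginal variance is
`β_t + α_t (1 - ᾱ_{t-1}) = 1 - ᾱ_t`, which turns the generic posterior into `μ̃_t`, `σ_t²`. -/

theorem gaussDensity_mul_gaussDensity_bayes {v₁ v₂ : ℝ} (hv₁ : 0 < v₁) (hv₂ : 0 < v₂)
    (c m x y : ℝ) :
    gaussDensity y (c * x) v₁ * gaussDensity x m v₂ =
      gaussDensity x ((v₁ * m + c * v₂ * y) / (v₁ + c ^ 2 * v₂)) (v₁ * v₂ / (v₁ + c ^ 2 * v₂)) *
        gaussDensity y (c * m) (v₁ + c ^ 2 * v₂) := by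
  have hs : 0 < v₁ + c ^ 2 * v₂ := by positivity
  have hπ := Real.pi_pos
  have hnormalizer : (2 * Real.pi * v₁) * (2 * Real.pi * v₂) =
      (2 * Real.pi * (v₁ * v₂ / (v₁ + c ^ 2 * v₂))) * (2 * Real.pi * (v₁ + c ^ 2 * v₂)) := by
    field_simp
  have hcomplete_square : -(y - c * x) ^ 2 / (2 * v₁) + -(x - m) ^ 2 / (2 * v₂) =
      -(x - (v₁ * m + c * v₂ * y) / (v₁ + c ^ 2 * v₂)) ^ 2 / (2 * (v₁ * v₂ / (v₁ + c ^ 2 * v₂))) +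
        -(y - c * m) ^ 2 / (2 * (v₁ + c ^ 2 * v₂)) := by
    field_simp
    ring
  unfold gaussDensity
  rw [mul_mul_mul_comm, ← mul_inv, ← Real.sqrt_mul (by positivity), ← Real.exp_add, hnormalizer,
    hcomplete_square, Real.sqrt_mul (by positivity), mul_inv, Real.exp_add, mul_mul_mul_comm]

theorem Finset.prod_lt_one_of_mem {ι R : Type*} [DecidableEq ι] [CommMonoidWithZero R]
    [Preorder R] [ZeroLEOneClass R] [PosMulMono R] {s : Finset ι} {f : ι → R} {j : ι}
    (h0 : ∀ i ∈ s, 0 ≤ f i) (h1 : ∀ i ∈ s, f i ≤ 1) (hj : j ∈ s) (hfj : f j < 1) :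
    ∏ i ∈ s, f i < 1 :=
  calc ∏ i ∈ s, f i = f j * ∏ i ∈ s.erase j, f i := (mul_prod_erase s f hj).symm
    _ ≤ f j * 1 :=
      mul_le_mul_of_nonneg_left
        (prod_le_one (fun i hi => h0 i (mem_of_mem_erase hi))
          (fun i hi => h1 i (mem_of_mem_erase hi)))
        (h0 j hj)
    _ < 1 := by rwa [mul_one]

theorem gaussDensity_forward_posterior {a b : ℝ} (ha : a < 1) (hb₀ : 0 < b) (hb₁ : b ≤ 1)
    (x₀ x' y : ℝ) :
    gaussDensity y (Real.sqrt (1 - b) * x') b * gaussDensity x' (Real.sqrt a * x₀) (1 - a) =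
      gaussDensity x'
          ((Real.sqrt a * b * x₀ + Real.sqrt (1 - b) * (1 - a) * y) / (1 - a * (1 - b)))
          ((1 - a) / (1 - a * (1 - b)) * b) *
        gaussDensity y (Real.sqrt (a * (1 - b)) * x₀) (1 - a * (1 - b)) := by
  have hmarginal : b + Real.sqrt (1 - b) ^ 2 * (1 - a) = 1 - a * (1 - b) := by
    rw [Real.sq_sqrt (by linarith)]
    ring
  rw [gaussDensity_mul_gaussDensity_bayes hb₀ (by linarith), hmarginal,
    Real.sqrt_mul' a (by linarith)]
  congr 1
  · congr 1 <;> ring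
  · congr 1
    ring

/-- Bayes-rule factorization of Gaussian densities showing that the forward-process
posterior `q(x_{t-1} | x_t, x_0)` of the continuous diffusion model is Gaussian with mean
`μ̃_t(y, x_0) = (√ᾱ_{t-1}·β_t·x_0 + √α_t·(1-ᾱ_{t-1})·y)/(1-ᾱ_t)` and variance
`σ_t² = ((1-ᾱ_{t-1})/(1-ᾱ_t))·β_t`. -/
theorem gaussian_posterior_factorization
    (T : ℕ) (β : ℕ → ℝ) (hβ : ∀ t, 1 ≤ t → t ≤ T → β t ∈ Set.Ioo (0 : ℝ) 1)
    (t : ℕ) (ht2 : 2 ≤ t) (htT : t ≤ T) :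
    ∀ x₀ x' y : ℝ,
      gaussDensity y (Real.sqrt (1 - β t) * x') (β t) *
        gaussDensity x' (Real.sqrt (∏ i ∈ Finset.Icc 1 (t - 1), (1 - β i)) * x₀)
          (1 - ∏ i ∈ Finset.Icc 1 (t - 1), (1 - β i)) =
      gaussDensity x'
          ((Real.sqrt (∏ i ∈ Finset.Icc 1 (t - 1), (1 - β i)) * β t * x₀ +
              Real.sqrt (1 - β t) * (1 - ∏ i ∈ Finset.Icc 1 (t - 1), (1 - β i)) * y) /
            (1 - ∏ i ∈ Finset.Icc 1 t, (1 - β i)))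
          (((1 - ∏ i ∈ Finset.Icc 1 (t - 1), (1 - β i)) /
              (1 - ∏ i ∈ Finset.Icc 1 t, (1 - β i))) * β t) *
        gaussDensity y (Real.sqrt (∏ i ∈ Finset.Icc 1 t, (1 - β i)) * x₀)
          (1 - ∏ i ∈ Finset.Icc 1 t, (1 - β i)) := by
  intro x₀ x' y
  have hβ_prev : ∀ i ∈ Icc 1 (t - 1), β i ∈ Set.Ioo (0 : ℝ) 1 := fun i hi =>
    hβ i (mem_Icc.1 hi).1 (by have := (mem_Icc.1 hi).2; omega)
  have hone_mem : 1 ∈ Icc 1 (t - 1) := mem_Icc.2 ⟨le_rfl, by omega⟩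
  have hᾱ_prev : ∏ i ∈ Icc 1 (t - 1), (1 - β i) < 1 :=
    prod_lt_one_of_mem (fun i hi => by linarith [(hβ_prev i hi).2])
      (fun i hi => by linarith [(hβ_prev i hi).1]) hone_mem
      (by linarith [(hβ_prev 1 hone_mem).1])
  have hᾱ_succ : ∏ i ∈ Icc 1 t, (1 - β i) = (∏ i ∈ Icc 1 (t - 1), (1 - β i)) * (1 - β t) := by
    obtain ⟨s, rfl⟩ : ∃ s, t = s + 1 := ⟨t - 1, by omega⟩
    exact prod_Icc_succ_top (by omega) _
  obtain ⟨hβt₀, hβt₁⟩ := hβ t (by omega) htT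
  rw [hᾱ_succ]
  exact gaussDensity_forward_posterior hᾱ_prev hβt₀ hβt₁.le x₀ x' y
end

section
/- Let K be a positive integer, β_1,…,β_T ∈ (0,1), α_t := 1−β_t, ᾱ_t := ∏_{i=1}^t α_i, and fix t with 2 ≤ t ≤ T. For indices a, b ∈ {1,…,K} write Q_t(a,b) := α_t·[a = b] + β_t/K and Q̄_s(a,b) := ᾱ_s·[a = b] + (1−ᾱ_s)/K. Then the Chapman–Kolmogorov identity holds: for all i, k ∈ {1,…,K}, Σ_{j=1}^K Q_t(k, j) · Q̄_{t−1}(i, j) = Q̄_t(i, k). -/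
open Finset

/-- Chapman–Kolmogorov identity for the uniform-noise categorical diffusion:
`Σ_j Q_t(k,j) · Q̄_{t-1}(i,j) = Q̄_t(i,k)`, where `Q_t(a,b) = α_t·[a=b] + β_t/K` and
`Q̄_s(a,b) = ᾱ_s·[a=b] + (1-ᾱ_s)/K`. -/
theorem chapman_kolmogorov_uniform_noise
    (K : ℕ) (hK : 0 < K) (T : ℕ)
    (β : ℕ → ℝ) (hβ : ∀ s, 1 ≤ s → s ≤ T → β s ∈ Set.Ioo (0 : ℝ) 1)
    (t : ℕ) (ht2 : 2 ≤ t) (htT : t ≤ T) :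
    ∀ i k : Fin K,
      ∑ j : Fin K,
          ((1 - β t) * (if k = j then (1 : ℝ) else 0) + β t / K) *
            ((∏ s ∈ Finset.Icc 1 (t - 1), (1 - β s)) * (if i = j then (1 : ℝ) else 0) +
              (1 - ∏ s ∈ Finset.Icc 1 (t - 1), (1 - β s)) / K) =
        (∏ s ∈ Finset.Icc 1 t, (1 - β s)) * (if i = k then (1 : ℝ) else 0) +
          (1 - ∏ s ∈ Finset.Icc 1 t, (1 - β s)) / K := by
  intro i k
  have hK' : (K : ℝ) ≠ 0 := Nat.cast_ne_zero.mpr hK.ne'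
  have ht1 : t - 1 + 1 = t := by omega
  have hprod : ∏ s ∈ Finset.Icc 1 t, (1 - β s)
      = (∏ s ∈ Finset.Icc 1 (t - 1), (1 - β s)) * (1 - β t) := by
    rw [← ht1, Finset.prod_Icc_succ_top (by omega)]
    simp
  rw [hprod]
  set A := ∏ s ∈ Finset.Icc 1 (t - 1), (1 - β s) with hA
  simp only [mul_add, add_mul, Finset.sum_add_distrib, mul_ite, ite_mul, mul_zero, zero_mul,
    mul_one, one_mul, Finset.sum_ite_eq, Finset.mem_univ, if_true, Finset.sum_const,
    Finset.card_univ, Fintype.card_fin, nsmul_eq_mul]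
  split_ifs with h1 h2 h2
  · field_simp; ring
  · exact absurd h1.symm h2
  · exact absurd h2.symm h1
  · field_simp; ring
end
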